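/- Let A and ⟨0⟩ be C-hyperideals of a commutative multiplicative hyperring G and S an MCS with A ∩ S = ∅. If A is a weakly quasi S-primary hyperideal of G that is not a quasi S-primary hyperideal of G, then rad(A) = rad(⟨0⟩). -/

import Mathlib

open Set

/-- A commutative multiplicative hyperring: a commutative additive group with a
commutative, associative hyperoperation `hmul` satisfying `(-a)∘b = -(a∘b)`,
weak distributivity, and having an identity element `e` with `a ∈ e∘a`. -/
class MulHyperring (G : Type*) extends AddCommGroup G where
  hmul : G → G → Set G
  hmul_nonempty : ∀ a b : G, (hmul a b).Nonempty
  hmul_comm : ∀ a b : G, hmul a b = hmul b a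
  hmul_assoc : ∀ a b c : G, (⋃ x ∈ hmul a b, hmul x c) = ⋃ x ∈ hmul b c, hmul a x
  neg_hmul : ∀ a b : G, hmul (-a) b = (fun x => -x) '' (hmul a b)
  hmul_add : ∀ a b c : G,
    hmul a (b + c) ⊆ {x | ∃ u ∈ hmul a b, ∃ v ∈ hmul a c, x = u + v}
  e : G
  e_mem : ∀ a : G, a ∈ hmul e a

namespace MulHyperring

variable {G : Type*} [MulHyperring G]

/-- Hyperproduct of an element with a set: `a ∘ B = ⋃ b ∈ B, a ∘ b`. -/
def smulSet (a : G) (B : Set G) : Set G := ⋃ b ∈ B, hmul a b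

/-- Hyperproduct of two sets. -/
def setMul (A B : Set G) : Set G := ⋃ a ∈ A, ⋃ b ∈ B, hmul a b

/-- Hyperproduct `a₁ ∘ a₂ ∘ ⋯ ∘ aₙ` of a (nonempty) list of elements. -/
def hProd : List G → Set G
  | [] => ∅
  | [a] => {a}
  | a :: b :: l => smulSet a (hProd (b :: l))

/-- `aⁿ` as a hyperproduct. -/
def hPow (a : G) (n : ℕ) : Set G := hProd (List.replicate n a)

/-- `A` is a hyperideal of `G`. -/
def IsHyperideal (A : Set G) : Prop :=
  A.Nonempty ∧ (∀ x ∈ A, ∀ y ∈ A, x - y ∈ A) ∧ ∀ r : G, ∀ x ∈ A, hmul r x ⊆ A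

/-- `A` is a `C`-hyperideal: any finite hyperproduct meeting `A` is contained in `A`. -/
def IsCHyperideal (A : Set G) : Prop :=
  IsHyperideal A ∧ ∀ l : List G, l ≠ [] → (hProd l ∩ A).Nonempty → hProd l ⊆ A

/-- The radical of a (C-)hyperideal: `{a | aⁿ ⊆ A for some n ≥ 1}`. -/
def rad (A : Set G) : Set G := {a | ∃ n : ℕ, 1 ≤ n ∧ hPow a n ⊆ A}

/-- The hyperideal generated by a set. -/
def idealGen (X : Set G) : Set G := ⋂₀ {A | IsHyperideal A ∧ X ⊆ A}

/-- The hyperideal product of two hyperideals. -/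
def idealMul (A B : Set G) : Set G := idealGen (setMul A B)

/-- Multiplicative closed subset. -/
def IsMCS (S : Set G) : Prop :=
  e ∈ S ∧ ∀ s₁ ∈ S, ∀ s₂ ∈ S, (hmul s₁ s₂ ∩ S).Nonempty

/-- Prime hyperideal. -/
def IsPrime (P : Set G) : Prop :=
  IsHyperideal P ∧ P ≠ univ ∧ ∀ x y : G, hmul x y ⊆ P → x ∈ P ∨ y ∈ P

/-- `S`-prime hyperideal. -/
def IsSPrime (S A : Set G) : Prop :=
  IsHyperideal A ∧ A ∩ S = ∅ ∧
    ∃ t ∈ S, ∀ u v : G, hmul u v ⊆ A → hmul t u ⊆ A ∨ hmul t v ⊆ A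

/-- `S`-primary hyperideal. -/
def IsSPrimary (S A : Set G) : Prop :=
  IsHyperideal A ∧ A ∩ S = ∅ ∧
    ∃ t ∈ S, ∀ u v : G, hmul u v ⊆ A → hmul t u ⊆ A ∨ hmul t v ⊆ rad A

/-- Quasi `S`-primary hyperideal. -/
def IsQuasiSPrimary (S A : Set G) : Prop :=
  IsHyperideal A ∧ A ∩ S = ∅ ∧
    ∃ t ∈ S, ∀ u v : G, hmul u v ⊆ A → hmul t u ⊆ rad A ∨ hmul t v ⊆ rad A

/-- Weakly quasi `S`-primary hyperideal. -/
def IsWeaklyQuasiSPrimary (S A : Set G) : Prop :=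
  IsHyperideal A ∧ A ∩ S = ∅ ∧
    ∃ t ∈ S, ∀ u v : G, 0 ∉ hmul u v → hmul u v ⊆ A →
      hmul t u ⊆ rad A ∨ hmul t v ⊆ rad A

/-- Strongly quasi `S`-primary hyperideal. -/
def IsStronglyQuasiSPrimary (S A : Set G) : Prop :=
  IsHyperideal A ∧ A ∩ S = ∅ ∧
    ∃ t ∈ S, ∀ u v : G, hmul u v ⊆ A →
      smulSet t (hPow u 2) ⊆ A ∨ hmul t v ⊆ rad A

/-- The residual `(B : x) = {y | y ∘ x ⊆ B}`. -/
def colon (B : Set G) (x : G) : Set G := {y | hmul y x ⊆ B}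

end MulHyperring


/-!
Let `t ∈ S` witness that `A` is weakly quasi `S`-primary. Since `A` is not quasi `S`-primary, some
`u ∘ v ⊆ A` has `t ∘ u, t ∘ v ⊄ rad A`, so `0 ∈ u ∘ v` and `u ∘ v ⊆ ⟨0⟩` by the `C`-property.
Perturbing `u` and `v` by elements `p, q ∈ A` keeps such a pair bad, and expanding the resulting
`0 ∈ (u + p) ∘ (v + q)` shows first `u ∘ A, v ∘ A ⊆ ⟨0⟩` and then `p ∘ q ⊆ ⟨0⟩`. Hence
`A ∘ A ⊆ ⟨0⟩ ⊆ A`, and `a²ⁿ ⊆ aⁿ ∘ aⁿ` gives `rad A = rad ⟨0⟩`.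
-/

open scoped Pointwise

namespace MulHyperring

variable {G : Type*} [MulHyperring G]

lemma hmul_add_subset (a b c : G) : hmul a (b + c) ⊆ hmul a b + hmul a c := fun _ hx => by
  obtain ⟨u, hu, v, hv, rfl⟩ := hmul_add a b c hx
  exact add_mem_add hu hv

lemma add_hmul_subset (a b c : G) : hmul (a + b) c ⊆ hmul a c + hmul b c := by
  simpa only [hmul_comm _ c] using hmul_add_subset c a b

lemma add_hmul_add_subset (a b c d : G) :
    hmul (a + b) (c + d) ⊆ hmul a c + hmul b c + (hmul a d + hmul b d) :=
  (hmul_add_subset _ c d).trans (add_subset_add (add_hmul_subset a b c) (add_hmul_subset a b d))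

namespace IsHyperideal

variable {A : Set G} (hA : IsHyperideal A)
include hA

lemma zero_mem : (0 : G) ∈ A := by
  obtain ⟨x, hx⟩ := hA.1
  simpa using hA.2.1 x hx x hx

lemma neg_mem {x : G} (hx : x ∈ A) : -x ∈ A := by
  simpa using hA.2.1 0 hA.zero_mem x hx

lemma add_mem {x y : G} (hx : x ∈ A) (hy : y ∈ A) : x + y ∈ A := by
  simpa using hA.2.1 x hx (-y) (hA.neg_mem hy)

lemma add_subset {X Y : Set G} (hX : X ⊆ A) (hY : Y ⊆ A) : X + Y ⊆ A :=
  add_subset_iff.2 fun _ hx _ hy => hA.add_mem (hX hx) (hY hy)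

lemma hmul_subset (r : G) {x : G} (hx : x ∈ A) : hmul r x ⊆ A := hA.2.2 r x hx

lemma hmul_subset_left {x : G} (hx : x ∈ A) (r : G) : hmul x r ⊆ A :=
  hmul_comm r x ▸ hA.hmul_subset r hx

lemma hmul_add_subset_of_subset {u v a : G} (huv : hmul u v ⊆ A) (ha : a ∈ A) :
    hmul u (v + a) ⊆ A :=
  (MulHyperring.hmul_add_subset u v a).trans (hA.add_subset huv (hA.hmul_subset u ha))

lemma nonempty_inter_of_zero_mem_add {X Y : Set G} (h0 : (0 : G) ∈ X + Y) (hX : X ⊆ A) :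
    (Y ∩ A).Nonempty := by
  obtain ⟨x, hx, y, hy, hxy⟩ := h0
  exact ⟨y, hy, eq_neg_of_add_eq_zero_right hxy ▸ hA.neg_mem (hX hx)⟩

end IsHyperideal

lemma IsCHyperideal.hmul_subset {B : Set G} (hB : IsCHyperideal B) {u v : G}
    (h : (hmul u v ∩ B).Nonempty) : hmul u v ⊆ B := by
  have hpair : hProd [u, v] = hmul u v := by simp [hProd, smulSet]
  simpa only [hpair] using hB.2 [u, v] (by simp) (by rwa [hpair])

lemma subset_idealGen (X : Set G) : X ⊆ idealGen X := fun _ hx _ hA => hA.2 hx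

lemma idealGen_subset {X A : Set G} (hA : IsHyperideal A) (hX : X ⊆ A) : idealGen X ⊆ A :=
  sInter_subset_of_mem ⟨hA, hX⟩

lemma hProd_cons (a : G) {l : List G} (hl : l ≠ []) : hProd (a :: l) = smulSet a (hProd l) := by
  obtain ⟨b, l', rfl⟩ := List.exists_cons_of_ne_nil hl
  rfl

lemma smulSet_setMul_subset (a : G) (X Y : Set G) :
    smulSet a (setMul X Y) ⊆ setMul (smulSet a X) Y := by
  intro z hz
  simp only [smulSet, setMul, mem_iUnion, exists_prop] at hz ⊢
  obtain ⟨w, ⟨x, hx, y, hy, hw⟩, hz⟩ := hz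
  have hz' : z ∈ ⋃ w ∈ hmul x y, hmul a w := mem_biUnion hw hz
  rw [← hmul_assoc] at hz'
  obtain ⟨r, hr, hz⟩ := mem_iUnion₂.1 hz'
  exact ⟨r, ⟨x, hx, hr⟩, y, hy, hz⟩

lemma hProd_append {l₁ l₂ : List G} (h₁ : l₁ ≠ []) (h₂ : l₂ ≠ []) :
    hProd (l₁ ++ l₂) ⊆ setMul (hProd l₁) (hProd l₂) := by
  induction l₁ with
  | nil => exact absurd rfl h₁
  | cons a l ih =>
    rcases eq_or_ne l [] with rfl | hl
    · intro z hz
      rw [List.singleton_append, hProd_cons a h₂] at hz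
      simpa [setMul, hProd, smulSet] using hz
    · rw [List.cons_append, hProd_cons a (by simp [hl]), hProd_cons a hl]
      exact (biUnion_mono (ih hl) fun _ _ => Subset.rfl).trans (smulSet_setMul_subset a _ _)

lemma hPow_one (a : G) : hPow a 1 = {a} := rfl

lemma hPow_succ (a : G) {n : ℕ} (hn : n ≠ 0) : hPow a (n + 1) = smulSet a (hPow a n) :=
  hProd_cons a (by simpa using hn)

lemma hPow_add_subset (a : G) {m n : ℕ} (hm : m ≠ 0) (hn : n ≠ 0) :
    hPow a (m + n) ⊆ setMul (hPow a m) (hPow a n) := by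
  simpa only [hPow, List.replicate_add] using
    hProd_append (l₁ := List.replicate m a) (by simpa using hm) (by simpa using hn)

lemma hPow_add_subset_add {A : Set G} (hA : IsHyperideal A) {a b : G} (hb : b ∈ A) {n : ℕ}
    (hn : 1 ≤ n) : hPow (a + b) n ⊆ hPow a n + A := by
  induction n, hn using Nat.le_induction with
  | base => simpa only [hPow_one, singleton_subset_iff] using add_mem_add (mem_singleton a) hb
  | succ n hn ih =>
    intro z hz
    rw [hPow_succ _ (by omega)] at hz
    obtain ⟨w, hw, hz⟩ := mem_iUnion₂.1 hz
    obtain ⟨x, hx, y, hy, rfl⟩ := ih hw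
    have hzx : z ∈ hmul a x + (hmul b x + A) := by
      rw [← add_assoc]
      exact add_subset_add (add_hmul_subset a b x) (hA.hmul_subset _ hy)
        (hmul_add_subset _ x y hz)
    rw [hPow_succ _ (by omega)]
    exact add_subset_add (subset_biUnion_of_mem hx)
      (hA.add_subset (hA.hmul_subset_left hb x) Subset.rfl) hzx

lemma rad_mono {A B : Set G} (h : A ⊆ B) : rad A ⊆ rad B :=
  fun _ ⟨n, hn, ha⟩ => ⟨n, hn, ha.trans h⟩

lemma IsHyperideal.add_mem_rad {A : Set G} (hA : IsHyperideal A) {a b : G} (ha : a ∈ rad A)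
    (hb : b ∈ A) : a + b ∈ rad A := by
  obtain ⟨n, hn, ha⟩ := ha
  exact ⟨n, hn, (hPow_add_subset_add hA hb hn).trans (hA.add_subset ha Subset.rfl)⟩

lemma IsHyperideal.hmul_subset_rad_of_add_mem {A : Set G} (hA : IsHyperideal A) {t u p : G}
    (hp : p ∈ A) (h : hmul t (u + p) ⊆ rad A) : hmul t u ⊆ rad A := by
  intro z hz
  rw [← add_neg_cancel_right u p] at hz
  obtain ⟨x, hx, y, hy, rfl⟩ := MulHyperring.hmul_add_subset t (u + p) (-p) hz
  have hyA : y ∈ A := by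
    rw [hmul_comm, neg_hmul] at hy
    obtain ⟨w, hw, rfl⟩ := hy
    exact hA.neg_mem (hA.hmul_subset_left hp t hw)
  exact hA.add_mem_rad (h hx) hyA

lemma rad_subset_rad_of_hmul_subset {A B : Set G} (h : ∀ p ∈ A, ∀ q ∈ A, hmul p q ⊆ B) :
    rad A ⊆ rad B := by
  rintro a ⟨n, hn, ha⟩
  refine ⟨n + n, by omega, fun z hz => ?_⟩
  obtain ⟨p, hp, hz⟩ := mem_iUnion₂.1 (hPow_add_subset a (by omega) (by omega) hz)
  obtain ⟨q, hq, hz⟩ := mem_iUnion₂.1 hz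
  exact h p (ha hp) q (ha hq) hz

section WeaklyQuasiSPrimary

variable {A B : Set G} {t u v : G}
  (hweak : ∀ u v : G, 0 ∉ hmul u v → hmul u v ⊆ A → hmul t u ⊆ rad A ∨ hmul t v ⊆ rad A)
include hweak

lemma zero_mem_hmul_of_not_subset_rad (huv : hmul u v ⊆ A) (hu : ¬ hmul t u ⊆ rad A)
    (hv : ¬ hmul t v ⊆ rad A) : (0 : G) ∈ hmul u v := by
  by_contra h0
  exact (hweak u v h0 huv).elim hu hv

variable (hA : IsHyperideal A) (hB : IsCHyperideal B) (huvA : hmul u v ⊆ A) (huvB : hmul u v ⊆ B)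
  (hu : ¬ hmul t u ⊆ rad A) (hv : ¬ hmul t v ⊆ rad A)
include hA hB huvA huvB hu hv

lemma hmul_subset_of_not_subset_rad {a : G} (ha : a ∈ A) : hmul u a ⊆ B := by
  by_contra hua
  have h0 : (0 : G) ∉ hmul u (v + a) := fun h0 =>
    hua (hB.hmul_subset (hB.1.nonempty_inter_of_zero_mem_add (hmul_add_subset u v a h0) huvB))
  have hva := (hweak u (v + a) h0 (hA.hmul_add_subset_of_subset huvA ha)).resolve_left hu
  exact hv (hA.hmul_subset_rad_of_add_mem ha hva)

lemma hmul_subset_of_mem_of_not_subset_rad {p q : G} (hp : p ∈ A) (hq : q ∈ A) :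
    hmul p q ⊆ B := by
  have hvA : hmul v u ⊆ A := hmul_comm u v ▸ huvA
  have hvB : hmul v u ⊆ B := hmul_comm u v ▸ huvB
  have hsub : hmul (u + p) (v + q) ⊆ A :=
    hA.hmul_add_subset_of_subset (hmul_comm v (u + p) ▸ hA.hmul_add_subset_of_subset hvA hp) hq
  have h0 := zero_mem_hmul_of_not_subset_rad hweak hsub
    (mt (hA.hmul_subset_rad_of_add_mem hp) hu) (mt (hA.hmul_subset_rad_of_add_mem hq) hv)
  have hpv : hmul p v ⊆ B :=
    hmul_comm v p ▸ hmul_subset_of_not_subset_rad hweak hA hB hvA hvB hv hu hp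
  have huq : hmul u q ⊆ B := hmul_subset_of_not_subset_rad hweak hA hB huvA huvB hu hv hq
  have h0' := add_hmul_add_subset u p v q h0
  rw [← add_assoc] at h0'
  exact hB.hmul_subset <| hB.1.nonempty_inter_of_zero_mem_add h0'
    (hB.1.add_subset (hB.1.add_subset huvB hpv) huq)

end WeaklyQuasiSPrimary

end MulHyperring

open MulHyperring in
theorem weaklyQuasiSPrimary_not_quasi_rad_eq_general {G : Type*} [MulHyperring G] (A S : Set G)
    (h0C : IsCHyperideal (idealGen {0} : Set G))
    (hw : IsWeaklyQuasiSPrimary S A) (hnq : ¬ IsQuasiSPrimary S A) :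
    rad A = rad (idealGen {0} : Set G) := by
  obtain ⟨hAi, hAS, t, htS, hweak⟩ := hw
  obtain ⟨u, v, huvA, hu, hv⟩ :
      ∃ u v, hmul u v ⊆ A ∧ ¬ hmul t u ⊆ rad A ∧ ¬ hmul t v ⊆ rad A := by
    by_contra! h
    exact hnq ⟨hAi, hAS, t, htS, fun u v huv => or_iff_not_imp_left.2 (h u v huv)⟩
  have huvZ : hmul u v ⊆ idealGen {0} := h0C.hmul_subset
    ⟨0, zero_mem_hmul_of_not_subset_rad hweak huvA hu hv, subset_idealGen _ rfl⟩
  refine (rad_subset_rad_of_hmul_subset fun p hp q hq => ?_).antisymm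
    (rad_mono (idealGen_subset hAi (singleton_subset_iff.2 hAi.zero_mem)))
  exact hmul_subset_of_mem_of_not_subset_rad hweak hAi h0C huvA huvZ hu hv hp hq

open MulHyperring in
theorem weaklyQuasiSPrimary_not_quasi_rad_eq {G : Type*} [MulHyperring G] (A S : Set G) (hA : IsCHyperideal A)
    (hS : IsMCS S) (hAS : A ∩ S = ∅)
    (h0C : IsCHyperideal (idealGen {0} : Set G))
    (hw : IsWeaklyQuasiSPrimary S A) (hnq : ¬ IsQuasiSPrimary S A) :
    rad A = rad (idealGen {0} : Set G) :=
  weaklyQuasiSPrimary_not_quasi_rad_eq_general A S h0C hw hnq
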